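/- arXiv:math/0411452 — 2 statements merged into one kernel-verified Lean document; each statement's English description precedes it below -/
import Mathlib

section
/- For any two distinct non-adjacent vertices [α] and [β] of the symplectic graph Sp(2ν,q), the number of vertices adjacent to both [α] and [β] is exactly q^{2ν-2}(q-1). -/
/-!
The form `B(u, w) = u K wᵀ` is alternating and nondegenerate, so `[z]` is adjacent to `[α]`
exactly when the linear functional `φ_α = (K αᵀ) · _` does not vanish at `z`. For `[α] ≠ [β]`
the functionals `φ_α, φ_β` are linearly independent, so `(φ_α, φ_β) : F^(2ν) → F²` is onto
with kernel of size `q^(2ν-2)`. Hence `(q-1)² q^(2ν-2)` vectors have both values nonzero, and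
every common neighbour is represented by exactly `q - 1` of them.
-/

open Matrix

/-- The standard nonsingular alternate matrix over `F` with `ν` diagonal blocks
`[[0,1],[-1,0]]`. -/
def sK (F : Type) [Field F] (ν : ℕ) : Matrix (Fin (2 * ν)) (Fin (2 * ν)) F :=
  Matrix.of fun i j =>
    if i.val % 2 = 0 ∧ j.val = i.val + 1 then (1 : F)
    else if j.val % 2 = 0 ∧ i.val = j.val + 1 then (-1 : F) else 0

/-- The symplectic graph `Sp(2ν, q)`: vertices are the one-dimensional subspaces
of `F^(2ν)`, with `[α]` adjacent to `[β]` iff `α K βᵀ ≠ 0`. -/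
def SpG (F : Type) [Field F] (ν : ℕ) :
    SimpleGraph (Projectivization F (Fin (2 * ν) → F)) :=
  SimpleGraph.fromRel fun x y => x.rep ⬝ᵥ ((sK F ν) *ᵥ y.rep) ≠ 0

open Finset in
theorem AddMonoidHom.card_filter_mem_eq_mul {G H F : Type*} [AddGroup G] [Fintype G]
    [AddMonoid H] [DecidableEq H] [FunLike F G H] [AddMonoidHomClass F G H] (ψ : F)
    (hψ : Function.Surjective ψ) (s : Finset H) :
    #{g | ψ g ∈ s} = #s * #{g | ψ g = 0} := by
  rw [card_eq_sum_card_fiberwise (s := {g | ψ g ∈ s}) (t := s) fun g hg => by simpa using hg,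
    ← smul_eq_mul, ← sum_const]
  refine sum_congr rfl fun h hh => ?_
  rw [filter_filter, filter_congr fun g _ => and_iff_right_of_imp fun (e : ψ g = h) => e ▸ hh]
  exact card_fiber_eq_of_mem_range ψ (hψ h) (hψ 0)

open scoped LinearAlgebra.Projectivization in
theorem Projectivization.natCard_subtype_eq_natCard_rep_mul {k V : Type*} [DivisionRing k]
    [AddCommGroup V] [Module k V] (Q : V → Prop) (h0 : ¬ Q 0)
    (hsmul : ∀ (c : kˣ) (v : V), Q (c • v) ↔ Q v) :
    Nat.card {v // Q v} = Nat.card {x : ℙ k V // Q x.rep} * (Nat.card k - 1) := by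
  have hrep (v : V) (hv : v ≠ 0) : Q (mk k v hv).rep ↔ Q v := by
    obtain ⟨c, hc⟩ := exists_smul_eq_mk_rep k v hv
    rw [← hc, hsmul]
  let e : {v // Q v} ≃ {x : ℙ k V // Q x.rep} × kˣ :=
    (Equiv.subtypeSubtypeEquivSubtype fun {v} (hv : Q v) (hv0 : v = 0) => h0 (hv0 ▸ hv)).symm.trans <|
      (Equiv.subtypeEquiv (nonZeroEquivProjectivizationProdUnits k V)
        fun v => (hrep v.1 v.2).symm).trans Equiv.prodSubtypeFstEquivSubtypeProd
  rw [Nat.card_congr e, Nat.card_prod, Nat.card_units]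

section LinearIndependentDual

open Module

variable {k V ι : Type*} [Field k] [AddCommGroup V] [Module k V] [Fintype ι]

theorem LinearMap.pi_surjective_of_linearIndependent {f : ι → Dual k V}
    (hf : LinearIndependent k f) : Function.Surjective (LinearMap.pi f) := by
  classical
  rw [← LinearMap.dualMap_injective_iff, ← LinearMap.ker_eq_bot, Submodule.eq_bot_iff]
  intro l hl
  have hcomb : ∑ i, l (fun j => if i = j then 1 else 0) • f i = 0 := by
    ext v
    have hv := LinearMap.congr_fun hl v
    rw [LinearMap.dualMap_apply, LinearMap.pi_apply_eq_sum_univ l] at hv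
    simpa [mul_comm] using hv
  have hzero := Fintype.linearIndependent_iff.mp hf _ hcomb
  exact LinearMap.ext fun x => by simp [LinearMap.pi_apply_eq_sum_univ l x, hzero]

theorem LinearMap.natCard_ker_pi_of_linearIndependent [Finite k] [Module.Finite k V]
    {f : ι → Dual k V} (hf : LinearIndependent k f) :
    Nat.card (LinearMap.ker (LinearMap.pi f)) = Nat.card k ^ (finrank k V - Fintype.card ι) := by
  have hrank := LinearMap.finrank_range_add_finrank_ker (LinearMap.pi f)
  rw [LinearMap.range_eq_top.mpr (pi_surjective_of_linearIndependent hf), finrank_top,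
    finrank_fintype_fun_eq_card] at hrank
  rw [natCard_eq_pow_finrank (K := k), ← hrank, Nat.add_sub_cancel_left]

open Finset in
theorem Module.Dual.natCard_forall_ne_zero_of_linearIndependent [Finite k] [Module.Finite k V]
    {f : ι → Dual k V} (hf : LinearIndependent k f) :
    Nat.card {v : V // ∀ i, f i v ≠ 0} =
      (Nat.card k - 1) ^ Fintype.card ι * Nat.card k ^ (finrank k V - Fintype.card ι) := by
  classical
  have := Fintype.ofFinite k
  have : Finite V := Module.finite_of_finite k
  have := Fintype.ofFinite V
  rw [← LinearMap.natCard_ker_pi_of_linearIndependent hf, Nat.card_eq_fintype_card,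
    Fintype.card_subtype,
    filter_congr (q := fun v => LinearMap.pi f v ∈ Fintype.piFinset fun _ => univ.erase 0)
      fun v _ => by simp,
    AddMonoidHom.card_filter_mem_eq_mul _ (LinearMap.pi_surjective_of_linearIndependent hf),
    Fintype.card_piFinset, prod_const, card_erase_of_mem (mem_univ _)]
  simp only [card_univ, ← Fintype.card_subtype, ← Nat.card_eq_fintype_card]
  rfl

end LinearIndependentDual

section SymplecticForm

variable {F : Type} [Field F] {ν : ℕ}

def sKUpper (F : Type) [Field F] (ν : ℕ) : Matrix (Fin (2 * ν)) (Fin (2 * ν)) F :=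
  Matrix.of fun i j => if i.val % 2 = 0 ∧ j.val = i.val + 1 then (1 : F) else 0

-- Writing `K = U - Uᵀ` (rather than `Kᵀ = -K`) is what makes `K` alternating in characteristic 2.
theorem sK_eq_sub_transpose : sK F ν = sKUpper F ν - (sKUpper F ν)ᵀ := by
  ext i j
  simp only [sK, sKUpper, Matrix.sub_apply, Matrix.transpose_apply, Matrix.of_apply]
  split_ifs <;> first | omega | ring

theorem dotProduct_sK_mulVec_self (u : Fin (2 * ν) → F) : u ⬝ᵥ (sK F ν *ᵥ u) = 0 := by
  rw [sK_eq_sub_transpose, sub_mulVec, dotProduct_sub, mulVec_transpose,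
    dotProduct_comm u (u ᵥ* _), ← dotProduct_mulVec, sub_self]

theorem dotProduct_sK_mulVec_antisymm (u w : Fin (2 * ν) → F) :
    u ⬝ᵥ (sK F ν *ᵥ w) = -((sK F ν *ᵥ u) ⬝ᵥ w) := by
  rw [dotProduct_mulVec, ← mulVec_transpose, sK_eq_sub_transpose, transpose_sub,
    transpose_transpose, ← neg_sub, neg_mulVec, neg_dotProduct]

theorem sK_apply_ne_zero_iff (i j : Fin (2 * ν)) :
    sK F ν i j ≠ 0 ↔ i.val / 2 = j.val / 2 ∧ i ≠ j := by
  simp only [sK, of_apply, ne_eq, Fin.ext_iff]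
  split_ifs <;> simp <;> omega

-- Row `i`, the partner of `j` in its `2 × 2` block, has a single nonzero entry, in column `j`.
theorem ker_mulVecLin_sK : LinearMap.ker (sK F ν).mulVecLin = ⊥ := by
  refine LinearMap.ker_eq_bot'.mpr fun v hv => funext fun j => ?_
  let i : Fin (2 * ν) := ⟨j / 2 * 2 + (1 - j % 2), by omega⟩
  have hij : sK F ν i j ≠ 0 := (sK_apply_ne_zero_iff i j).mpr (by simp [i, Fin.ext_iff]; omega)
  have hrow : (sK F ν *ᵥ v) i = sK F ν i j * v j := by
    refine Finset.sum_eq_single j (fun k _ hkj => ?_) (absurd (Finset.mem_univ j))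
    suffices sK F ν i k = 0 from mul_eq_zero_of_left this (v k)
    by_contra hik
    have := (sK_apply_ne_zero_iff i k).mp hik
    simp [i, Fin.ext_iff] at this hkj
    omega
  have : sK F ν i j * v j = 0 := hrow ▸ congrFun hv i
  exact (mul_eq_zero.mp this).resolve_left hij

theorem SpG_adj_iff (x z : Projectivization F (Fin (2 * ν) → F)) :
    (SpG F ν).Adj x z ↔ (sK F ν *ᵥ x.rep) ⬝ᵥ z.rep ≠ 0 := by
  rw [SpG, SimpleGraph.fromRel_adj, dotProduct_sK_mulVec_antisymm x.rep, neg_ne_zero,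
    dotProduct_comm z.rep, or_self, and_iff_right_of_imp]
  rintro h rfl
  exact h (by rw [dotProduct_comm, dotProduct_sK_mulVec_self])

theorem linearIndependent_dotProduct_sK_mulVec_rep {x y : Projectivization F (Fin (2 * ν) → F)}
    (hne : x ≠ y) :
    LinearIndependent F fun i : Fin 2 => dotProductEquiv F _ (sK F ν *ᵥ (![x, y] i).rep) := by
  have hrep := Projectivization.independent_iff.mp
    ((Projectivization.independent_pair_iff_ne x y).mpr hne)
  exact (hrep.map' _ ker_mulVecLin_sK).map' _ (dotProductEquiv F _).ker

end SymplecticForm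

theorem common_neighbors_nonadj_SpG_general (q ν : ℕ) (F : Type) [Field F] [Fintype F]
    (hF : Fintype.card F = q)
    (x y : Projectivization F (Fin (2 * ν) → F)) (hne : x ≠ y) :
    ((SpG F ν).neighborSet x ∩ (SpG F ν).neighborSet y).ncard
      = q ^ (2 * ν - 2) * (q - 1) := by
  set f := fun i : Fin 2 => dotProductEquiv F _ (sK F ν *ᵥ (![x, y] i).rep)
  have hf : LinearIndependent F f := linearIndependent_dotProduct_sK_mulVec_rep hne
  have hset : (SpG F ν).neighborSet x ∩ (SpG F ν).neighborSet y = {z | ∀ i, f i z.rep ≠ 0} := by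
    ext z
    simp [f, SpG_adj_iff, Fin.forall_fin_two]
  have hvec := Module.Dual.natCard_forall_ne_zero_of_linearIndependent hf
  have hproj := Projectivization.natCard_subtype_eq_natCard_rep_mul (k := F)
    (fun v => ∀ i, f i v ≠ 0) (by simp) fun c v => by
      simp only [Units.smul_def, map_smul, smul_eq_mul, ne_eq, mul_eq_zero, c.ne_zero, false_or]
  rw [Nat.card_eq_fintype_card (α := F), hF, Module.finrank_fin_fun, Fintype.card_fin] at hvec
  rw [Nat.card_eq_fintype_card (α := F), hF] at hproj
  rw [hset, ← Nat.card_coe_set_eq]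
  have hq : 0 < q - 1 := by have := hF ▸ Fintype.one_lt_card (α := F); omega
  refine Nat.eq_of_mul_eq_mul_right hq (hproj.symm.trans (hvec.trans ?_))
  ring

theorem common_neighbors_nonadj_SpG (q ν : ℕ) (F : Type) [Field F] [Fintype F]
    (hF : Fintype.card F = q) (hν : 1 ≤ ν)
    (x y : Projectivization F (Fin (2 * ν) → F)) (hne : x ≠ y)
    (hxy : ¬ (SpG F ν).Adj x y) :
    ((SpG F ν).neighborSet x ∩ (SpG F ν).neighborSet y).ncard
      = q ^ (2 * ν - 2) * (q - 1) :=
  common_neighbors_nonadj_SpG_general q ν F hF x y hne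
end

section
/- Let T be a 2ν×2ν nonsingular matrix over F_q and let σ_T be the map on vertices of Sp(2ν,q) sending [α] to [αT]. Then σ_T is an automorphism of the graph Sp(2ν,q) if and only if T is a generalized symplectic matrix, i.e., T K Tᵀ = kK for some nonzero k ∈ F_q. -/
open Matrix

theorem vecMul_unit_ne_zero {n : Type} [Fintype n] [DecidableEq n] {F : Type} [Field F]
    {T : Matrix n n F} (hT : IsUnit T) {v : n → F} (hv : v ≠ 0) :
    v ᵥ* T ≠ 0 := by
  intro h
  apply hv
  have h2 := congrArg (fun w => w ᵥ* ((hT.unit⁻¹ : (Matrix n n F)ˣ) : Matrix n n F)) h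
  simp only [Matrix.vecMul_vecMul, Matrix.zero_vecMul] at h2
  rw [IsUnit.mul_val_inv, Matrix.vecMul_one] at h2
  exact h2

/-- The map `σ_T : [α] ↦ [αT]` induced on vertices of `Sp(2ν,q)` by a
nonsingular matrix `T`. -/
noncomputable def sigmaT (F : Type) [Field F] (ν : ℕ)
    (T : Matrix (Fin (2 * ν)) (Fin (2 * ν)) F) (hT : IsUnit T) :
    Projectivization F (Fin (2 * ν) → F) → Projectivization F (Fin (2 * ν) → F) :=
  fun x => Projectivization.mk F (x.rep ᵥ* T) (vecMul_unit_ne_zero hT x.rep_nonzero)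

variable {F : Type} [Field F] {ν : ℕ}

lemma sK_apply (i j : Fin (2 * ν)) : sK F ν i j =
    if i.val % 2 = 0 ∧ j.val = i.val + 1 then (1 : F)
    else if j.val % 2 = 0 ∧ i.val = j.val + 1 then (-1 : F) else 0 := rfl

lemma sK_transpose : (sK F ν)ᵀ = -(sK F ν) := by
  ext i j
  simp only [Matrix.transpose_apply, Matrix.neg_apply, sK_apply]
  split_ifs with h1 h2 h3 h4 <;> first | ring1 | (exfalso; omega)

lemma neg_one_apply' (i j : Fin (2 * ν)) :
    (if (j : ℕ) = (i : ℕ) then (-1 : F) else 0)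
      = (-1 : Matrix (Fin (2 * ν)) (Fin (2 * ν)) F) i j := by
  simp only [Matrix.neg_apply, Matrix.one_apply]
  by_cases h : i = j
  · subst h; rw [if_pos rfl, if_pos rfl]
  · rw [if_neg (fun hh => h (Fin.ext hh.symm)), if_neg h, neg_zero]

lemma sK_mul_sK : sK F ν * sK F ν = (-1 : Matrix _ _ F) := by
  ext i j
  rw [Matrix.mul_apply]
  rcases Nat.mod_two_eq_zero_or_one i.val with he | ho
  · have hi1 : i.val + 1 < 2 * ν := by omega
    rw [Finset.sum_eq_single (⟨i.val + 1, hi1⟩ : Fin (2 * ν))]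
    · have e1 : sK F ν i ⟨i.val + 1, hi1⟩ = 1 := by
        rw [sK_apply]; simp only [Fin.val_mk]
        split_ifs with h1 h2 <;> first | rfl | (exfalso; (try simp only [and_true, true_and] at *); omega)
      have e2 : sK F ν ⟨i.val + 1, hi1⟩ j = if (j : ℕ) = (i : ℕ) then -1 else 0 := by
        rw [sK_apply]; simp only [Fin.val_mk]
        split_ifs with h1 h2 h3 h4 <;> first | rfl | (exfalso; (try simp only [and_true, true_and] at *); omega)
      rw [e1, e2, one_mul]
      exact neg_one_apply' i j
    · intro k _ hk
      have hkv : k.val ≠ i.val + 1 := fun h => hk (Fin.ext h)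
      have : sK F ν i k = 0 := by
        rw [sK_apply, if_neg, if_neg] <;> rintro ⟨a, b⟩ <;> omega
      rw [this, zero_mul]
    · intro h; exact absurd (Finset.mem_univ _) h
  · have hi1 : i.val - 1 < 2 * ν := by omega
    rw [Finset.sum_eq_single (⟨i.val - 1, hi1⟩ : Fin (2 * ν))]
    · have e1 : sK F ν i ⟨i.val - 1, hi1⟩ = -1 := by
        rw [sK_apply]; simp only [Fin.val_mk]
        split_ifs with h1 h2 <;> first | rfl | (exfalso; (try simp only [and_true, true_and] at *); omega)
      have e2 : sK F ν ⟨i.val - 1, hi1⟩ j = if (j : ℕ) = (i : ℕ) then 1 else 0 := by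
        rw [sK_apply]; simp only [Fin.val_mk]
        split_ifs with h1 h2 h3 h4 <;> first | rfl | (exfalso; (try simp only [and_true, true_and] at *); omega)
      rw [e1, e2, show (-1 : F) * (if (j : ℕ) = (i : ℕ) then 1 else 0)
            = (if (j : ℕ) = (i : ℕ) then (-1 : F) else 0) by split_ifs <;> ring1]
      exact neg_one_apply' i j
    · intro k _ hk
      have hkv : k.val ≠ i.val - 1 := fun h => hk (Fin.ext h)
      have : sK F ν i k = 0 := by
        rw [sK_apply, if_neg, if_neg] <;> rintro ⟨a, b⟩ <;> omega
      rw [this, zero_mul]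
    · intro h; exact absurd (Finset.mem_univ _) h

lemma isUnit_sK : IsUnit (sK F ν) :=
  ⟨⟨sK F ν, -(sK F ν), by rw [Matrix.mul_neg, sK_mul_sK, neg_neg],
    by rw [Matrix.neg_mul, sK_mul_sK, neg_neg]⟩, rfl⟩


lemma sK_alt (v : Fin (2 * ν) → F) : v ⬝ᵥ (sK F ν *ᵥ v) = 0 := by
  set J : Matrix (Fin (2 * ν)) (Fin (2 * ν)) F :=
    Matrix.of (fun i j => if i.val % 2 = 0 ∧ j.val = i.val + 1 then (1 : F) else 0) with hJ
  have hK : sK F ν = J - Jᵀ := by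
    ext i j
    simp only [sK_apply, Matrix.sub_apply, Matrix.transpose_apply, hJ, Matrix.of_apply]
    split_ifs <;> first | ring1 | (exfalso; omega)
  rw [hK, Matrix.sub_mulVec, dotProduct_sub, sub_eq_zero, Matrix.mulVec_transpose,
    dotProduct_comm v (v ᵥ* J), ← Matrix.dotProduct_mulVec]

lemma skew_dot (u v : Fin (2 * ν) → F) :
    v ⬝ᵥ (sK F ν *ᵥ u) = -(u ⬝ᵥ (sK F ν *ᵥ v)) := by
  rw [dotProduct_comm, ← Matrix.vecMul_transpose, Matrix.dotProduct_mulVec, sK_transpose,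
    Matrix.vecMul_neg, neg_dotProduct, ← Matrix.dotProduct_mulVec]

lemma adj_iff (x y : Projectivization F (Fin (2 * ν) → F)) :
    (SpG F ν).Adj x y ↔ x.rep ⬝ᵥ (sK F ν *ᵥ y.rep) ≠ 0 := by
  rw [SpG, SimpleGraph.fromRel_adj]
  constructor
  · rintro ⟨hne, h | h⟩
    · exact h
    · rw [skew_dot x.rep y.rep] at h
      exact fun h0 => h (by rw [h0, neg_zero])
  · intro h
    refine ⟨fun heq => h ?_, Or.inl h⟩
    rw [heq]; exact sK_alt y.rep

lemma dot_smul_smul (A : Matrix (Fin (2 * ν)) (Fin (2 * ν)) F) (a b : F)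
    (u v : Fin (2 * ν) → F) :
    (a • u) ⬝ᵥ (A *ᵥ (b • v)) = a * b * (u ⬝ᵥ (A *ᵥ v)) := by
  rw [Matrix.mulVec_smul, smul_dotProduct, dotProduct_smul, smul_eq_mul, smul_eq_mul]; ring

lemma adj_mk_iff (u v : Fin (2 * ν) → F) (hu : u ≠ 0) (hv : v ≠ 0) :
    (SpG F ν).Adj (Projectivization.mk F u hu) (Projectivization.mk F v hv) ↔
      u ⬝ᵥ (sK F ν *ᵥ v) ≠ 0 := by
  rw [adj_iff]
  obtain ⟨a, ha⟩ := Projectivization.exists_smul_eq_mk_rep F u hu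
  obtain ⟨b, hb⟩ := Projectivization.exists_smul_eq_mk_rep F v hv
  rw [← ha, ← hb, Units.smul_def, Units.smul_def, dot_smul_smul]
  simp [a.ne_zero, b.ne_zero, mul_ne_zero_iff]

lemma conj_dot (T : Matrix (Fin (2 * ν)) (Fin (2 * ν)) F) (u v : Fin (2 * ν) → F) :
    (u ᵥ* T) ⬝ᵥ (sK F ν *ᵥ (v ᵥ* T)) = u ⬝ᵥ ((T * sK F ν * Tᵀ) *ᵥ v) := by
  rw [← Matrix.mulVec_mulVec, ← Matrix.mulVec_mulVec, Matrix.dotProduct_mulVec u T,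
    Matrix.mulVec_transpose]

lemma vecMul_cancel {A : Matrix (Fin (2 * ν)) (Fin (2 * ν)) F} (hA : IsUnit A)
    {u v : Fin (2 * ν) → F} (h : u ᵥ* A = v ᵥ* A) : u = v := by
  have h2 := congrArg (fun w => w ᵥ* ((hA.unit⁻¹ : (Matrix (Fin (2 * ν)) (Fin (2 * ν)) F)ˣ) : Matrix (Fin (2 * ν)) (Fin (2 * ν)) F)) h
  simp only [Matrix.vecMul_vecMul] at h2
  rw [IsUnit.mul_val_inv, Matrix.vecMul_one, Matrix.vecMul_one] at h2
  exact h2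

lemma proportional {n : Type} [Fintype n] [DecidableEq n] {w1 w2 : n → F} (hw2 : w2 ≠ 0)
    (h : ∀ v, w1 ⬝ᵥ v = 0 ↔ w2 ⬝ᵥ v = 0) : ∃ c : F, w1 = c • w2 := by
  have : ∃ j, w2 j ≠ 0 := by
    by_contra hc
    push_neg at hc
    exact hw2 (funext fun j => hc j)
  obtain ⟨j, hj⟩ := this
  refine ⟨w1 j / w2 j, funext fun i => ?_⟩
  have h2 : w2 ⬝ᵥ (Pi.single i (w2 j) - Pi.single j (w2 i)) = 0 := by
    rw [dotProduct_sub, dotProduct_single, dotProduct_single]; ring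
  have h1 := (h _).2 h2
  rw [dotProduct_sub, dotProduct_single, dotProduct_single] at h1
  have h0 : w1 i * w2 j - w1 j * w2 i = 0 := h1
  show w1 i = w1 j / w2 j * w2 i
  field_simp
  linear_combination h0

theorem sigmaT_automorphism_iff_generalized_symplectic (q ν : ℕ) (F : Type) [Field F]
    [Fintype F] (hF : Fintype.card F = q) (hν : 1 ≤ ν)
    (T : Matrix (Fin (2 * ν)) (Fin (2 * ν)) F) (hT : IsUnit T) :
    (∃ g : SpG F ν ≃g SpG F ν, ⇑g = sigmaT F ν T hT) ↔
      ∃ k : F, k ≠ 0 ∧ T * sK F ν * Tᵀ = k • sK F ν := by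
  have hTt : IsUnit Tᵀ := by
    rw [Matrix.isUnit_iff_isUnit_det, Matrix.det_transpose, ← Matrix.isUnit_iff_isUnit_det]
    exact hT
  have hM : IsUnit (T * sK F ν * Tᵀ) := (hT.mul isUnit_sK).mul hTt
  constructor
  · rintro ⟨g, hg⟩
    have key : ∀ (u v : Fin (2 * ν) → F), u ≠ 0 → v ≠ 0 →
        (u ⬝ᵥ ((T * sK F ν * Tᵀ) *ᵥ v) = 0 ↔ u ⬝ᵥ (sK F ν *ᵥ v) = 0) := by
      intro u v hu hv
      have h1 := g.map_rel_iff (a := Projectivization.mk F u hu) (b := Projectivization.mk F v hv)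
      rw [hg] at h1
      simp only [sigmaT] at h1
      obtain ⟨a, ha⟩ := Projectivization.exists_smul_eq_mk_rep F u hu
      obtain ⟨b, hb⟩ := Projectivization.exists_smul_eq_mk_rep F v hv
      rw [adj_mk_iff, adj_mk_iff, ← ha, ← hb, Units.smul_def, Units.smul_def,
        Matrix.smul_vecMul, Matrix.smul_vecMul, dot_smul_smul, conj_dot] at h1
      have h2 := not_iff_not.mp h1
      rw [mul_eq_zero, mul_eq_zero] at h2
      simpa [a.ne_zero, b.ne_zero] using h2
    have key2 : ∀ u : Fin (2 * ν) → F, u ≠ 0 →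
        ∃ c : F, c ≠ 0 ∧ u ᵥ* (T * sK F ν * Tᵀ) = c • (u ᵥ* sK F ν) := by
      intro u hu
      have hw1 : u ᵥ* (T * sK F ν * Tᵀ) ≠ 0 := vecMul_unit_ne_zero hM hu
      have hw2 : u ᵥ* sK F ν ≠ 0 := vecMul_unit_ne_zero isUnit_sK hu
      have hprop : ∀ v, (u ᵥ* (T * sK F ν * Tᵀ)) ⬝ᵥ v = 0 ↔ (u ᵥ* sK F ν) ⬝ᵥ v = 0 := by
        intro v
        by_cases hv : v = 0
        · subst hv; simp
        · rw [← Matrix.dotProduct_mulVec, ← Matrix.dotProduct_mulVec]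
          exact key u v hu hv
      obtain ⟨c, hc⟩ := proportional hw2 hprop
      refine ⟨c, fun hc0 => ?_, hc⟩
      rw [hc0, zero_smul] at hc
      exact hw1 hc
    have smul_cancel : ∀ {a b : F} {w : Fin (2 * ν) → F}, w ≠ 0 → a • w = b • w → a = b := by
      intro a b w hw h
      by_contra hne
      have h2 : (a - b) • w = 0 := by rw [sub_smul, h, sub_self]
      rcases smul_eq_zero.mp h2 with h3 | h3
      · exact hne (sub_eq_zero.mp h3)
      · exact hw h3
    have indep : ∀ u u' : Fin (2 * ν) → F, u ≠ 0 → (¬ ∃ t : F, u' = t • u) →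
        ∀ a b : F, a • (u ᵥ* sK F ν) + b • (u' ᵥ* sK F ν) = 0 → a = 0 ∧ b = 0 := by
      intro u u' hu hdep a b hab
      have hKu : u ᵥ* sK F ν ≠ 0 := vecMul_unit_ne_zero isUnit_sK hu
      have hb : b = 0 := by
        by_contra hb0
        apply hdep
        refine ⟨-a / b, vecMul_cancel isUnit_sK ?_⟩
        rw [Matrix.smul_vecMul]
        have hb' : b • (u' ᵥ* sK F ν) = -(a • (u ᵥ* sK F ν)) := by
          rw [eq_neg_iff_add_eq_zero, add_comm]; exact hab
        have hstep : u' ᵥ* sK F ν = b⁻¹ • (b • (u' ᵥ* sK F ν)) := by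
          rw [smul_smul, inv_mul_cancel₀ hb0, one_smul]
        rw [hstep, hb', smul_neg, smul_smul, ← neg_smul]
        congr 1
        field_simp
      refine ⟨?_, hb⟩
      rw [hb, zero_smul, add_zero] at hab
      rcases smul_eq_zero.mp hab with h3 | h3
      · exact h3
      · exact absurd h3 hKu
    have const : ∀ (u u' : Fin (2 * ν) → F), u ≠ 0 → u' ≠ 0 → ∀ (c c' : F),
        u ᵥ* (T * sK F ν * Tᵀ) = c • (u ᵥ* sK F ν) →
        u' ᵥ* (T * sK F ν * Tᵀ) = c' • (u' ᵥ* sK F ν) → c = c' := by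
      intro u u' hu hu' c c' hc hc'
      by_cases hdep : ∃ t : F, u' = t • u
      · obtain ⟨t, rfl⟩ := hdep
        have ht : t ≠ 0 := fun h => hu' (by rw [h, zero_smul])
        rw [Matrix.smul_vecMul, Matrix.smul_vecMul, hc, smul_smul, smul_smul] at hc'
        have h5 := smul_cancel (vecMul_unit_ne_zero isUnit_sK hu) hc'
        exact mul_left_cancel₀ ht (by rw [h5]; ring)
      · have hsum : u + u' ≠ 0 := by
          intro h0
          exact hdep ⟨-1, by rw [neg_one_smul]; exact (neg_eq_of_add_eq_zero_right h0).symm⟩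
        obtain ⟨c'', hc''0, hc''⟩ := key2 (u + u') hsum
        rw [Matrix.add_vecMul, hc, hc', Matrix.add_vecMul, smul_add] at hc''
        have hsum2 : (c - c'') • (u ᵥ* sK F ν) + (c' - c'') • (u' ᵥ* sK F ν) = 0 := by
          have h9 := sub_eq_zero.mpr hc''
          rw [sub_smul, sub_smul, ← h9]
          abel
        obtain ⟨h1, h2⟩ := indep u u' hu hdep (c - c'') (c' - c'') hsum2
        rw [sub_eq_zero] at h1 h2
        rw [h1, h2]
    have h2ν : (0 : ℕ) < 2 * ν := by omega
    have hse : ∀ i : Fin (2 * ν), (Pi.single i (1 : F) : Fin (2 * ν) → F) ≠ 0 := by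
      intro i h
      have h9 := congrFun h i
      rw [Pi.single_eq_same, Pi.zero_apply] at h9
      exact one_ne_zero h9
    obtain ⟨k, hk0, hk⟩ := key2 (Pi.single ⟨0, h2ν⟩ 1) (hse _)
    refine ⟨k, hk0, ?_⟩
    ext i j
    obtain ⟨c, hc0, hc⟩ := key2 (Pi.single i 1) (hse i)
    have hck : c = k := const _ _ (hse i) (hse _) c k hc hk
    have hrow := congrFun hc j
    simp only [Matrix.single_vecMul, Pi.smul_apply, smul_eq_mul, one_mul] at hrow
    rw [Matrix.smul_apply, smul_eq_mul, ← hck]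
    exact hrow
  · rintro ⟨k, hk0, hMk⟩
    have hinj : Function.Injective (sigmaT F ν T hT) := by
      intro x y h
      obtain ⟨a, ha⟩ := (Projectivization.mk_eq_mk_iff F _ _ _ _).1 h
      have h2 : x.rep = (a : F) • y.rep :=
        vecMul_cancel hT (by rw [Matrix.smul_vecMul, ← ha, Units.smul_def])
      rw [← Projectivization.mk_rep x, ← Projectivization.mk_rep y,
        Projectivization.mk_eq_mk_iff]
      exact ⟨a, by rw [Units.smul_def]; exact h2.symm⟩
    have hsur : Function.Surjective (sigmaT F ν T hT) := by
      intro z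
      have hw : z.rep ᵥ* ((hT.unit⁻¹ : (Matrix (Fin (2 * ν)) (Fin (2 * ν)) F)ˣ) :
          Matrix (Fin (2 * ν)) (Fin (2 * ν)) F) ≠ 0 :=
        vecMul_unit_ne_zero (Units.isUnit _) z.rep_nonzero
      refine ⟨Projectivization.mk F _ hw, ?_⟩
      obtain ⟨b, hb⟩ := Projectivization.exists_smul_eq_mk_rep F _ hw
      show Projectivization.mk F _ _ = z
      conv_rhs => rw [← Projectivization.mk_rep z]
      rw [Projectivization.mk_eq_mk_iff]
      refine ⟨b, ?_⟩
      rw [← hb, Units.smul_def, Units.smul_def, Matrix.smul_vecMul, Matrix.vecMul_vecMul,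
        IsUnit.val_inv_mul, Matrix.vecMul_one]
    refine ⟨⟨Equiv.ofBijective _ ⟨hinj, hsur⟩, ?_⟩, rfl⟩
    intro x y
    show (SpG F ν).Adj (Projectivization.mk F (x.rep ᵥ* T) (vecMul_unit_ne_zero hT x.rep_nonzero))
      (Projectivization.mk F (y.rep ᵥ* T) (vecMul_unit_ne_zero hT y.rep_nonzero)) ↔ (SpG F ν).Adj x y
    rw [adj_mk_iff, conj_dot, hMk, Matrix.smul_mulVec, dotProduct_smul, smul_eq_mul,
      adj_iff]
    constructor
    · intro h h0; exact h (by rw [h0, mul_zero])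
    · exact fun h => mul_ne_zero hk0 h
end
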